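/- arXiv:math/0504289 — 2 statements merged into one kernel-verified Lean document; each statement's English description precedes it below -/
import Mathlib

section
/- The limit B := lim_{x→∞} (∑_{p ≤ x} 1/p − ln ln x) exists and is finite. -/
/-!
Legendre's formula `log n! = ∑_{p ≤ n} v_p(n!) log p`, the bounds `n/p - 1 < v_p(n!) ≤ n/(p-1)`,
Chebyshev's `θ(n) ≤ n log 4` and `n log n - n ≤ log n! ≤ n log n` give Mertens' first theorem:
`S(x) = ∑_{p ≤ x} log p / p` is `log x + R(x)` with `R` bounded. Abel summation writes
`∑_{p ≤ x} 1/p = S(x)/log x + ∫_2^x S(t)/(t log² t) dt`, and substituting `S = log + R` turns this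
into `log log x - log log 2 + 1 + R(x)/log x + ∫_2^x R(t)/(t log² t) dt`. The last integral
converges because `1/(t log² t)` is integrable on `(2, ∞)`.
-/

open Real Finset Filter MeasureTheory
open scoped Nat

namespace Nat

theorem div_le_factorization_factorial {p : ℕ} (hp : p.Prime) (n : ℕ) :
    n / p ≤ (n !).factorization p := by
  rw [factorization_factorial hp (Nat.lt_add_of_pos_right two_pos : log p n < log p n + 2)]
  simpa using single_le_sum (f := fun i ↦ n / p ^ i) (fun _ _ ↦ zero_le _)
    (by simp : 1 ∈ Ico 1 (log p n + 2))

theorem cast_factorization_factorial_le {p : ℕ} (hp : p.Prime) (n : ℕ) :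
    ((n !).factorization p : ℝ) ≤ n / p + 2 * n / p ^ 2 := by
  have hp2 : (2 : ℝ) ≤ p := mod_cast hp.two_le
  have hle : ((p : ℝ) - 1) * (n !).factorization p ≤ n := by
    have h : (p - 1) * (n !).factorization p ≤ n :=
      sub_one_mul_factorization_factorial hp ▸ Nat.sub_le _ _
    rw [← Nat.cast_one, ← Nat.cast_sub hp.one_le]
    exact_mod_cast h
  have hn : (0 : ℝ) ≤ n := n.cast_nonneg
  calc ((n !).factorization p : ℝ) ≤ n / (p - 1) := by
        rw [le_div_iff₀ (by linarith)]; linarith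
    _ ≤ n / p + 2 * n / p ^ 2 := by
        rw [div_add_div _ _ (by positivity) (by positivity),
          div_le_div_iff₀ (by linarith) (by positivity)]
        nlinarith [mul_nonneg (mul_nonneg hn (sub_nonneg.2 hp2)) (by linarith : (0 : ℝ) ≤ p)]

end Nat

theorem Real.log_factorial_eq_sum_primesLE (n : ℕ) :
    log (n ! : ℝ) = ∑ p ∈ Nat.primesLE n, ((n !).factorization p : ℝ) * log p := by
  rw [log_nat_eq_sum_factorization, Finsupp.sum_of_support_subset _ ?_ _ (by simp)]
  intro p hp
  simp only [Nat.support_factorization, Nat.mem_primeFactors] at hp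
  exact Nat.mem_primesLE.2 ⟨(hp.1.dvd_factorial).1 hp.2.1, hp.1⟩

theorem Real.log_factorial_le_mul_log (n : ℕ) : log (n ! : ℝ) ≤ n * log n := by
  rw [← log_pow]
  exact log_le_log (by positivity) (mod_cast n.factorial_le_pow)

theorem Real.mul_log_sub_le_log_factorial (n : ℕ) : n * log n - n ≤ log (n ! : ℝ) := by
  rcases eq_or_ne n 0 with rfl | hn
  · simp
  have := Stirling.le_log_factorial_stirling hn
  have := log_natCast_nonneg n
  have := log_nonneg (by linarith [pi_gt_three] : (1 : ℝ) ≤ 2 * π)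
  linarith

theorem Real.summable_log_div_sq : Summable fun k : ℕ ↦ log k / (k : ℝ) ^ 2 := by
  refine ((summable_nat_rpow.2 (by norm_num : (-3 / 2 : ℝ) < -1)).mul_left 2).of_nonneg_of_le
    (fun k ↦ by positivity) fun k ↦ ?_
  rcases eq_or_ne k 0 with rfl | hk
  · simp
  have hk : (0 : ℝ) < k := by positivity
  have hlog : log k ≤ 2 * (k : ℝ) ^ (1 / 2 : ℝ) := by
    simpa [div_eq_mul_inv, mul_comm] using log_le_rpow_div hk.le (by norm_num : (0 : ℝ) < 1 / 2)
  calc log k / (k : ℝ) ^ 2 ≤ 2 * (k : ℝ) ^ (1 / 2 : ℝ) / (k : ℝ) ^ 2 := by gcongr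
    _ = 2 * (k : ℝ) ^ (-3 / 2 : ℝ) := by
      rw [mul_div_assoc, ← rpow_natCast, ← rpow_sub hk]; norm_num

namespace Mertens

noncomputable def sumLogDiv (x : ℝ) : ℝ := ∑ p ∈ Nat.primesLE ⌊x⌋₊, log p / p

theorem natCast_mul_sumLogDiv_le (n : ℕ) :
    n * sumLogDiv n ≤ log (n ! : ℝ) + Chebyshev.theta n := by
  rw [sumLogDiv, Nat.floor_natCast, mul_sum, log_factorial_eq_sum_primesLE,
    Chebyshev.theta_eq_sum_primesLE_log, ← sum_add_distrib]
  refine sum_le_sum fun p hp ↦ ?_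
  have hp := (Nat.mem_primesLE.1 hp).2
  have hdiv : (n : ℝ) / p ≤ (n / p : ℕ) + 1 := by
    rw [← Nat.floor_div_eq_div (K := ℝ)]; exact (Nat.lt_floor_add_one _).le
  have hv : ((n / p : ℕ) : ℝ) ≤ (n !).factorization p :=
    mod_cast Nat.div_le_factorization_factorial hp n
  calc n * (log p / p) = n / p * log p := by ring
    _ ≤ ((n !).factorization p + 1) * log p := by
      gcongr
      linarith
    _ = _ := by ring

theorem log_factorial_le_natCast_mul_sumLogDiv (n : ℕ) :
    log (n ! : ℝ) ≤ n * sumLogDiv n + 2 * n * ∑' k : ℕ, log k / (k : ℝ) ^ 2 := by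
  have hK : ∑ p ∈ Nat.primesLE n, log p / (p : ℝ) ^ 2 ≤ ∑' k : ℕ, log k / (k : ℝ) ^ 2 :=
    summable_log_div_sq.sum_le_tsum _ fun k _ ↦ by positivity
  calc log (n ! : ℝ) ≤ ∑ p ∈ Nat.primesLE n, (n / p + 2 * n / p ^ 2) * log p := by
        rw [log_factorial_eq_sum_primesLE]
        exact sum_le_sum fun p hp ↦ mul_le_mul_of_nonneg_right
          (Nat.cast_factorization_factorial_le (Nat.mem_primesLE.1 hp).2 n) (log_natCast_nonneg p)
    _ = n * sumLogDiv n + 2 * n * ∑ p ∈ Nat.primesLE n, log p / (p : ℝ) ^ 2 := by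
        rw [sumLogDiv, Nat.floor_natCast, mul_sum, mul_sum, ← sum_add_distrib]
        exact sum_congr rfl fun p _ ↦ by ring
    _ ≤ _ := by gcongr

theorem sumLogDiv_natCast_le {n : ℕ} (hn : n ≠ 0) : sumLogDiv n ≤ log n + log 4 := by
  have := natCast_mul_sumLogDiv_le n
  have := log_factorial_le_mul_log n
  have := Chebyshev.theta_le_log4_mul_x n.cast_nonneg
  refine le_of_mul_le_mul_left ?_ (by positivity : (0 : ℝ) < n)
  linarith

theorem log_sub_le_sumLogDiv_natCast {n : ℕ} (hn : n ≠ 0) :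
    log n - (1 + 2 * ∑' k : ℕ, log k / (k : ℝ) ^ 2) ≤ sumLogDiv n := by
  have := log_factorial_le_natCast_mul_sumLogDiv n
  have := mul_log_sub_le_log_factorial n
  refine le_of_mul_le_mul_left ?_ (by positivity : (0 : ℝ) < n)
  linarith

theorem abs_sumLogDiv_sub_log_le {x : ℝ} (hx : 1 ≤ x) :
    |sumLogDiv x - log x| ≤ log 8 + 1 + 2 * ∑' k : ℕ, log k / (k : ℝ) ^ 2 := by
  set n := ⌊x⌋₊
  have hn : n ≠ 0 := Nat.one_le_iff_ne_zero.1 ((Nat.one_le_floor_iff x).2 hx)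
  have hn' : (1 : ℝ) ≤ n := mod_cast Nat.one_le_iff_ne_zero.2 hn
  have hfloor : sumLogDiv x = sumLogDiv n := by simp [sumLogDiv, n]
  have hlog_le : log n ≤ log x := log_le_log (by positivity) (Nat.floor_le (by linarith))
  have hle_log : log x ≤ log n + log 2 := by
    rw [← log_mul (by positivity) (by norm_num)]
    exact log_le_log (by linarith) (by linarith [Nat.lt_floor_add_one x])
  have h8 : log 8 = log 4 + log 2 := by rw [← log_mul] <;> norm_num
  have := sumLogDiv_natCast_le hn
  have := log_sub_le_sumLogDiv_natCast hn
  have : 0 ≤ ∑' k : ℕ, log k / (k : ℝ) ^ 2 := tsum_nonneg fun k ↦ by positivity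
  have := log_nonneg (by norm_num : (1 : ℝ) ≤ 4)
  rw [abs_le, hfloor]
  constructor <;> linarith

theorem measurable_sumLogDiv : Measurable sumLogDiv :=
  (measurable_from_nat (f := fun n ↦ ∑ p ∈ Nat.primesLE n, log p / p)).comp Nat.measurable_floor

theorem integrableOn_sumLogDiv_sub_log_mul_Ioi :
    IntegrableOn (fun t ↦ (sumLogDiv t - log t) * (t⁻¹ / log t ^ 2)) (Set.Ioi 2) := by
  refine Integrable.mono' ((integrableOn_inv_div_log_sq_Ioi one_lt_two).const_mul
    (log 8 + 1 + 2 * ∑' k : ℕ, log k / (k : ℝ) ^ 2)) ?_ ?_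
  · exact ((measurable_sumLogDiv.sub measurable_log).mul
      (measurable_inv.div (measurable_log.pow_const 2))).aestronglyMeasurable
  · filter_upwards [ae_restrict_mem measurableSet_Ioi] with t ht
    have ht : (2 : ℝ) < t := ht
    have hw : 0 ≤ t⁻¹ / log t ^ 2 := by positivity
    rw [norm_mul, norm_of_nonneg hw, norm_eq_abs]
    exact mul_le_mul_of_nonneg_right (abs_sumLogDiv_sub_log_le (by linarith)) hw

theorem tendsto_sumLogDiv_sub_log_div_log :
    Tendsto (fun x ↦ (sumLogDiv x - log x) / log x) atTop (nhds 0) := by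
  have hbound := tendsto_log_atTop.inv_tendsto_atTop.const_mul
    (log 8 + 1 + 2 * ∑' k : ℕ, log k / (k : ℝ) ^ 2)
  rw [mul_zero] at hbound
  refine squeeze_zero_norm' ?_ hbound
  filter_upwards [eventually_ge_atTop 1] with x hx
  rw [norm_div, norm_of_nonneg (log_nonneg hx), div_eq_mul_inv]
  exact mul_le_mul_of_nonneg_right (abs_sumLogDiv_sub_log_le hx) (inv_nonneg.2 (log_nonneg hx))

theorem sumLogDiv_eq_sum_indicator (x : ℝ) :
    sumLogDiv x = ∑ k ∈ Icc 0 ⌊x⌋₊, Set.indicator {k | k.Prime} (fun k : ℕ ↦ log k / k) k := by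
  simp [sumLogDiv, Nat.primesLE_eq_filter_Icc_zero, sum_filter, Set.indicator_apply]

theorem sum_inv_prime_eq {x : ℝ} (hx : 2 ≤ x) :
    ∑ p ∈ Nat.primesLE ⌊x⌋₊, (1 : ℝ) / p =
      sumLogDiv x / log x + ∫ t in 2..x, sumLogDiv t * (t⁻¹ / log t ^ 2) := by
  simp only [sumLogDiv_eq_sum_indicator]
  set c := Set.indicator {k | k.Prime} (fun k : ℕ ↦ log k / k)
  have hsum : ∑ p ∈ Nat.primesLE ⌊x⌋₊, (1 : ℝ) / p = ∑ k ∈ Icc 0 ⌊x⌋₊, (log k)⁻¹ * c k := by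
    rw [Nat.primesLE_eq_filter_Icc_zero, sum_filter]
    refine sum_congr rfl fun k _ ↦ ?_
    by_cases hk : k.Prime
    · have : log k ≠ 0 := log_ne_zero_of_pos_of_ne_one (mod_cast hk.pos) (mod_cast hk.ne_one)
      simp [c, hk, field]
    · simp [c, hk]
  rw [hsum, sum_mul_eq_sub_integral_mul₁ c (f := fun t ↦ (log t)⁻¹) (by simp [c]) (by simp [c])
    x ?diff ?int, ← intervalIntegral.integral_of_le hx, sub_eq_add_neg,
    ← intervalIntegral.integral_neg, div_eq_inv_mul]
  case diff => exact fun t ht ↦ differentiableAt_inv_log (by grind) (by grind) (by grind)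
  case int =>
    rw [deriv_inv_log]
    refine ContinuousOn.integrableOn_Icc fun t ht ↦ ContinuousAt.continuousWithinAt ?_
    have : t ≠ 0 := by grind
    have : log t ^ 2 ≠ 0 := pow_ne_zero 2 (log_pos (by grind)).ne'
    fun_prop
  congr 1
  exact intervalIntegral.integral_congr fun t _ ↦ by simp only [deriv_inv_log_apply]; ring

theorem sum_inv_prime_sub_log_log_eq {x : ℝ} (hx : 2 ≤ x) :
    ∑ p ∈ Nat.primesLE ⌊x⌋₊, (1 : ℝ) / p - log (log x) =
      (sumLogDiv x - log x) / log x + (1 - log (log 2)) +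
        ∫ t in 2..x, (sumLogDiv t - log t) * (t⁻¹ / log t ^ 2) := by
  have hlog : log x ≠ 0 := (log_pos (by linarith)).ne'
  have hsplit : ∫ t in 2..x, sumLogDiv t * (t⁻¹ / log t ^ 2) =
      ∫ t in 2..x, (t⁻¹ / log t + (sumLogDiv t - log t) * (t⁻¹ / log t ^ 2)) := by
    refine intervalIntegral.integral_congr fun t ht ↦ ?_
    have : log t ≠ 0 := (log_pos (by grind [Set.uIcc_of_le hx])).ne'
    field_simp
    ring
  have hint : IntervalIntegrable (fun t ↦ (sumLogDiv t - log t) * (t⁻¹ / log t ^ 2)) volume 2 x :=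
    (intervalIntegrable_iff_integrableOn_Ioc_of_le hx).2
      (integrableOn_sumLogDiv_sub_log_mul_Ioi.mono_set Set.Ioc_subset_Ioi_self)
  have hinv : IntervalIntegrable (fun t ↦ t⁻¹ / log t) volume 2 x := by
    refine ContinuousOn.intervalIntegrable fun t ht ↦ ContinuousAt.continuousWithinAt ?_
    rw [Set.uIcc_of_le hx] at ht
    have : t ≠ 0 := by grind
    have : log t ≠ 0 := (log_pos (by grind)).ne'
    fun_prop
  rw [sum_inv_prime_eq hx, hsplit, intervalIntegral.integral_add hinv hint,
    integral_inv_div_log one_lt_two (by linarith)]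
  field_simp
  ring

end Mertens

open Mertens

theorem mertens_constant_exists :
    ∃ B : ℝ, Filter.Tendsto
      (fun x : ℝ => ∑ p ∈ (Finset.range (⌊x⌋₊ + 1)).filter Nat.Prime, (1 : ℝ) / p
        - Real.log (Real.log x))
      Filter.atTop (nhds B) := by
  have hlimit := (tendsto_sumLogDiv_sub_log_div_log.add_const (1 - log (log 2))).add
    (intervalIntegral_tendsto_integral_Ioi 2 integrableOn_sumLogDiv_sub_log_mul_Ioi tendsto_id)
  rw [zero_add] at hlimit
  refine ⟨_, hlimit.congr' ?_⟩
  filter_upwards [eventually_ge_atTop 2] with x hx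
  exact (sum_inv_prime_sub_log_log_eq hx).symm
end

section
/- Define χ(x) := θ(x) + θ(√x) + θ(x^{1/3}) + ⋯ where θ is the Chebyshev theta function. Then for all real x > 1, χ(x) − χ(x/2) < x. -/
/-!
Since `χ = ψ`, the difference `χ(x) - χ(x/2)` is `log` of `lcm(1..n) / lcm(1..⌊n/2⌋)` with
`n = ⌊x⌋`. A prime `p` raises its exponent from the second `lcm` to the first exactly when some
power `p ^ j` lies in `(n/2, n]`, and then only by one. By Kummer's theorem such a `p` divides
`choose n (n/2)` unless `p ^ j = n - n/2`, so the quotient divides `(n - n/2) * choose n (n/2)`,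
whose logarithm is at most `log ((n + 1) / 2) + n log 2 < n`.
-/

/-- Chebyshev's first function `θ(x) = ∑_{p ≤ x} ln p`. -/
noncomputable def chebyshevTheta (x : ℝ) : ℝ :=
  ∑ p ∈ (Finset.range (⌊x⌋₊ + 1)).filter Nat.Prime, Real.log p

/-- `χ(x) = θ(x) + θ(√x) + θ(x^{1/3}) + ⋯` (a finite sum since `θ(t) = 0` for `t < 2`). -/
noncomputable def chebyshevChi (x : ℝ) : ℝ :=
  ∑' k : ℕ, chebyshevTheta (x ^ (((k : ℝ) + 1)⁻¹))

open Finset Real Chebyshev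

theorem chebyshevTheta_eq_theta (x : ℝ) : chebyshevTheta x = θ x := by
  rw [chebyshevTheta, theta_eq_sum_Icc, Nat.range_succ_eq_Icc_zero]

theorem chebyshevChi_eq_psi {x : ℝ} (hx : 0 < x) : chebyshevChi x = ψ x := by
  set N := ⌊log x / log 2⌋₊
  have hvanish : ∀ k ∉ range N, chebyshevTheta (x ^ (((k : ℝ) + 1)⁻¹)) = 0 := by
    intro k hk
    have hNk : N < k + 1 := by simp only [mem_range, not_lt] at hk; omega
    rw [chebyshevTheta_eq_theta]
    apply theta_eq_zero_of_lt_two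
    rw [rpow_inv_lt_iff_of_pos hx.le zero_le_two (by positivity),
      ← log_lt_log_iff hx (by positivity), log_rpow zero_lt_two,
      ← div_lt_iff₀ (log_pos one_lt_two)]
    exact_mod_cast Nat.lt_of_floor_lt hNk
  rw [chebyshevChi, tsum_eq_sum hvanish, psi_eq_sum_theta hx.le, ← Ico_add_one_right_eq_Icc,
    sum_Ico_eq_sum_range, Nat.add_sub_cancel]
  refine sum_congr rfl fun k _ => ?_
  rw [chebyshevTheta_eq_theta, one_div, add_comm 1 k, Nat.cast_add_one]

theorem Nat.Prime.dvd_choose_of_lt_pow {p a b j : ℕ} (hp : p.Prime) (hj : j ≠ 0)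
    (ha : a < p ^ j) (hab : b - a < p ^ j) (h : p ^ j ≤ b) : p ∣ b.choose a := by
  have : Fact p.Prime := ⟨hp⟩
  have hjlog : j ≤ Nat.log p b := Nat.le_log_of_pow_le hp.one_lt h
  -- adding `a` and `b - a` in base `p` carries into digit `j`
  have hcarry : j ∈ {i ∈ Ico 1 (Nat.log p b + 1) | p ^ i ≤ a % p ^ i + (b - a) % p ^ i} := by
    rw [mem_filter, mem_Ico, Nat.mod_eq_of_lt ha, Nat.mod_eq_of_lt hab]
    omega
  apply dvd_of_one_le_padicValNat
  rw [padicValNat_choose (by omega) (Nat.lt_succ_self _)]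
  exact Finset.card_pos.2 ⟨j, hcarry⟩

theorem Nat.lcmUpto_dvd_lcmUpto_mul_sub_mul_choose {n m : ℕ} (h : n ≤ 2 * m + 1) :
    lcmUpto n ∣ lcmUpto m * ((n - m) * n.choose m) := by
  rcases le_or_gt n m with hnm | hmn
  · simp [Nat.sub_eq_zero_of_le hnm]
  have hD : (n - m) * n.choose m ≠ 0 := mul_ne_zero (by omega) (Nat.choose_pos hmn.le).ne'
  rw [← factorization_prime_le_iff_dvd (lcmUpto_ne_zero n) (mul_ne_zero (lcmUpto_ne_zero m) hD)]
  intro p hp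
  rw [factorization_mul (lcmUpto_ne_zero m) hD, Finsupp.add_apply, factorization_lcmUpto n hp,
    factorization_lcmUpto m hp]
  set j := Nat.log p m + 1
  have hmj : m < p ^ j := Nat.lt_pow_succ_log_self hp.one_lt m
  rcases lt_or_ge n (p ^ j) with hnj | hjn
  · have := Nat.log_lt_of_lt_pow (by omega) hnj
    omega
  have hnj : n < p ^ (j + 1) := by
    rw [pow_succ]
    nlinarith [hp.two_le]
  have hlog : Nat.log p n ≤ j := Nat.lt_succ_iff.1 (Nat.log_lt_of_lt_pow (by omega) hnj)
  suffices p ∣ (n - m) * n.choose m by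
    have := (hp.dvd_iff_one_le_factorization hD).1 this
    omega
  rcases lt_or_ge (n - m) (p ^ j) with hsub | hsub
  · exact dvd_mul_of_dvd_right (hp.dvd_choose_of_lt_pow (by omega) hmj hsub hjn) _
  · have : n - m = p ^ j := by omega
    exact dvd_mul_of_dvd_left (this ▸ dvd_pow_self p (by omega)) _

theorem Chebyshev.psi_sub_psi_le_log_sub_mul_choose {n m : ℕ} (h : n ≤ 2 * m + 1) :
    ψ n - ψ m ≤ log (((n - m) * n.choose m : ℕ) : ℝ) := by
  rcases le_or_gt n m with hnm | hmn
  · simpa [Nat.sub_eq_zero_of_le hnm] using psi_mono (Nat.cast_le.2 hnm)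
  have hD : 0 < (n - m) * n.choose m := Nat.mul_pos (by omega) (Nat.choose_pos hmn.le)
  have hle : (Nat.lcmUpto n : ℝ) ≤ Nat.lcmUpto m * ((n - m) * n.choose m : ℕ) := by
    exact_mod_cast Nat.le_of_dvd (Nat.mul_pos (Nat.lcmUpto_pos m) hD)
      (Nat.lcmUpto_dvd_lcmUpto_mul_sub_mul_choose h)
  rw [psi_eq_log_lcmUpto, psi_eq_log_lcmUpto, sub_le_iff_le_add',
    ← log_mul (by exact_mod_cast (Nat.lcmUpto_pos m).ne') (by exact_mod_cast hD.ne')]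
  exact log_le_log (by exact_mod_cast Nat.lcmUpto_pos n) hle

theorem mul_log_two_add_log_lt {t : ℝ} (ht : 1 ≤ t) : t * log 2 + log ((t + 1) / 2) < t := by
  have hlog2 : t * log 2 ≤ t * 0.6931471808 := by gcongr; exact log_two_lt_d9.le
  have hpos : 0 < (t + 1) / 2 := by positivity
  rcases le_or_gt t 2 with ht2 | ht2
  · linarith [log_le_sub_one_of_pos hpos]
  · -- `log s ≤ s / e`: the tangent line of `log` at `e`
    have hdiv : log ((t + 1) / 2) ≤ (t + 1) / 2 / exp 1 := by
      have := log_le_sub_one_of_pos (div_pos hpos (exp_pos 1))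
      rwa [log_div hpos.ne' (exp_ne_zero 1), log_exp, sub_le_sub_iff_right] at this
    have he : (t + 1) / 2 / exp 1 ≤ (t + 1) / 2 / (5 / 2) :=
      div_le_div_of_nonneg_left hpos.le (by norm_num) (by linarith [exp_one_gt_d9])
    linarith

theorem log_sub_half_mul_choose_half_lt {n : ℕ} (hn : 1 ≤ n) :
    log (((n - n / 2) * n.choose (n / 2) : ℕ) : ℝ) < n := by
  have hA : 0 < n - n / 2 := by omega
  have hAle : ((n - n / 2 : ℕ) : ℝ) ≤ (n + 1) / 2 := by
    rw [le_div_iff₀ two_pos]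
    exact_mod_cast (show (n - n / 2) * 2 ≤ n + 1 by omega)
  have hC : (n.choose (n / 2) : ℝ) ≤ 2 ^ n := by exact_mod_cast Nat.choose_le_two_pow n (n / 2)
  have hCpos : (0 : ℝ) < n.choose (n / 2) := by
    exact_mod_cast Nat.choose_pos (Nat.div_le_self n 2)
  calc log (((n - n / 2) * n.choose (n / 2) : ℕ) : ℝ)
      = log ((n - n / 2 : ℕ) : ℝ) + log (n.choose (n / 2) : ℝ) := by
        push_cast [Nat.cast_mul]
        exact log_mul (by positivity) hCpos.ne'
    _ ≤ log ((n + 1) / 2) + log (2 ^ n) := by gcongr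
    _ < n := by
        rw [Real.log_pow, add_comm]
        exact mul_log_two_add_log_lt (by exact_mod_cast hn)

theorem chebyshevChi_sub_lt (x : ℝ) (hx : 1 < x) :
    chebyshevChi x - chebyshevChi (x / 2) < x := by
  set n := ⌊x⌋₊
  have hn : 1 ≤ n := Nat.le_floor (by exact_mod_cast hx.le)
  rw [chebyshevChi_eq_psi (by positivity), chebyshevChi_eq_psi (by positivity),
    psi_eq_psi_coe_floor x, psi_eq_psi_coe_floor (x / 2), Nat.floor_div_ofNat]
  calc ψ n - ψ (n / 2 : ℕ) ≤ log (((n - n / 2) * n.choose (n / 2) : ℕ) : ℝ) :=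
        psi_sub_psi_le_log_sub_mul_choose (by omega)
    _ < n := log_sub_half_mul_choose_half_lt hn
    _ ≤ x := Nat.floor_le (by positivity)
end
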